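/- arXiv:1906.07648 — 2 statements merged into one kernel-verified Lean document; each statement's English description precedes it below -/
import Mathlib

section
/- For every k ≥ 3, every tournament T on n = k·(2·r(k−1) − k + 1) vertices has a perfect fractional T_k-tiling. Equivalently, the fractional tiling threshold satisfies trs(k) ≤ k·(2·r(k−1) − k + 1). -/
open Finset

/-- An oriented graph: at most one directed edge between any pair of vertices. -/
structure OrientedGraph (V : Type*) where
  adj : V → V → Prop
  asymm : ∀ u v, adj u v → ¬ adj v u

namespace OrientedGraph

variable {V : Type*}

/-- A tournament: a complete oriented graph. -/
def IsTournament (G : OrientedGraph V) : Prop :=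
  ∀ u v : V, u ≠ v → G.adj u v ∨ G.adj v u

/-- `U` is the vertex set of a copy of the transitive tournament on `k` vertices in `G`. -/
def IsTTCopy (G : OrientedGraph V) (k : ℕ) (U : Finset V) : Prop :=
  ∃ f : Fin k ↪ V, Finset.univ.map f = U ∧
    ∀ i j : Fin k, i < j → G.adj (f i) (f j)

/-- Total degree of a vertex: the number of edges incident to it. -/
noncomputable def degree [Fintype V] (G : OrientedGraph V) (v : V) : ℕ :=
  Nat.card {u : V // G.adj v u ∨ G.adj u v}

/-- Minimum total degree. -/
noncomputable def minDegree [Fintype V] (G : OrientedGraph V) : ℕ :=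
  sInf (Set.range G.degree)

/-- Number of (directed) edges. -/
noncomputable def edgeCount [Fintype V] (G : OrientedGraph V) : ℕ :=
  Nat.card {p : V × V // G.adj p.1 p.2}

section
variable [Fintype V] [DecidableEq V]

/-- A fractional `T_k`-tiling: a weight function on copies of the transitive tournament
`T_k` such that every vertex has total incident weight at most `1`. -/
def IsFracTiling (G : OrientedGraph V) (k : ℕ) (w : Finset V → ℝ) : Prop :=
  (∀ U, 0 ≤ w U) ∧ (∀ U, ¬ G.IsTTCopy k U → w U = 0) ∧
    ∀ v : V, ∑ U ∈ Finset.univ.filter (fun U => v ∈ U), w U ≤ 1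

/-- A perfect fractional `T_k`-tiling: total weight `n/k`. -/
def HasPerfectFracTiling (G : OrientedGraph V) (k : ℕ) : Prop :=
  ∃ w : Finset V → ℝ, G.IsFracTiling k w ∧
    ∑ U : Finset V, w U = (Fintype.card V : ℝ) / k

/-- A perfect `T_k`-tiling: vertex-disjoint copies of `T_k` covering all vertices. -/
def HasPerfectTiling (G : OrientedGraph V) (k : ℕ) : Prop :=
  ∃ P : Finset (Finset V), (∀ U ∈ P, G.IsTTCopy k U) ∧
    (P : Set (Finset V)).PairwiseDisjoint id ∧ P.sup id = Finset.univ

end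

end OrientedGraph

/-- The oriented Ramsey number `r(k)`: the least `m` such that every tournament on `m`
vertices contains a copy of the transitive tournament `T_k`. -/
noncomputable def oRamsey (k : ℕ) : ℕ :=
  sInf {m | ∀ G : OrientedGraph (Fin m), G.IsTournament → ∃ U, G.IsTTCopy k U}

/-- `trs k`: the least (positive) `n` such that every tournament on `n` vertices has a
perfect fractional `T_k`-tiling. -/
noncomputable def trs (k : ℕ) : ℕ :=
  sInf {n | 0 < n ∧ ∀ G : OrientedGraph (Fin n), G.IsTournament → G.HasPerfectFracTiling k}

/-- `trInt k`: the least (positive) `n` such that every tournament on `n` vertices has a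
perfect `T_k`-tiling. -/
noncomputable def trInt (k : ℕ) : ℕ :=
  sInf {n | 0 < n ∧ ∀ G : OrientedGraph (Fin n), G.IsTournament → G.HasPerfectTiling k}

/-!
Let `n = kq`. Up to the factor `q`, a perfect fractional `T_k`-tiling is a convex combination of
indicator vectors of copies of `T_k` equal to the constant vector `1/q`; by Hahn–Banach it exists
as soon as, for every weighting `y` of the vertices, some copy carries at least `1/q` of the total.
Let `B` be the `q` heaviest vertices and split the other `(k-1)q` vertices into `q` blocks `A` of
size `k-1`, one for each `b ∈ B`. The set `(B \ {b}) ∪ A` has `q + k - 2 ≥ 2r(k-1) - 1` vertices,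
so the out- or the in-neighbourhood of `b` in it has `r(k-1)` vertices, hence contains a
`T_{k-1}`, which `b` extends to a `T_k`. The vertices of this copy other than `b` weigh at least as
much as `A`, since those outside `A` lie in `B`. Summing over the `q` blocks bounds the total
weight by `q` times the weight of the heaviest copy.
-/

namespace Finset

section Order

variable {α M : Type*} [LinearOrder M] {f : α → M}

lemma sum_le_sum_of_card_eq_of_forall_le [AddCommMonoid M] [IsOrderedAddMonoid M] {s t : Finset α}
    (hst : #s = #t) (h : ∀ a ∈ s, ∀ b ∈ t, f a ≤ f b) : ∑ a ∈ s, f a ≤ ∑ b ∈ t, f b := by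
  rcases t.eq_empty_or_nonempty with rfl | ht
  · rw [card_empty, card_eq_zero] at hst
    simp [hst]
  calc ∑ a ∈ s, f a ≤ #s • t.inf' ht f :=
        sum_le_card_nsmul _ _ _ fun a ha => le_inf' ht f fun b hb => h a ha b hb
    _ = #t • t.inf' ht f := by rw [hst]
    _ ≤ ∑ b ∈ t, f b := card_nsmul_le_sum _ _ _ fun b hb => inf'_le f hb

lemma sum_le_sum_of_sdiff_subset_of_forall_notMem_le [AddCommMonoid M]
    [IsOrderedCancelAddMonoid M] [DecidableEq α] {A X B : Finset α}
    (hB : ∀ b ∈ B, ∀ t ∉ B, f t ≤ f b) (hAX : #A = #X) (hAB : Disjoint A B)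
    (hXA : X \ A ⊆ B) : ∑ a ∈ A, f a ≤ ∑ x ∈ X, f x := by
  rw [← sum_sdiff_le_sum_sdiff]
  refine sum_le_sum_of_card_eq_of_forall_le (card_sdiff_comm hAX) fun a ha x hx => ?_
  exact hB x (hXA hx) a (disjoint_left.1 hAB (mem_sdiff.1 ha).1)

lemma exists_card_eq_forall_notMem_le [Fintype α] [DecidableEq α] (f : α → M) {m : ℕ}
    (hm : m ≤ Fintype.card α) : ∃ B : Finset α, #B = m ∧ ∀ b ∈ B, ∀ t ∉ B, f t ≤ f b := by
  induction m with
  | zero => exact ⟨∅, rfl, by simp⟩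
  | succ m ih =>
    obtain ⟨B, hBm, hB⟩ := ih (by omega)
    obtain ⟨t₀, ht₀, ht₀max⟩ := exists_max_image Bᶜ f
      (by rw [← card_pos, card_compl, hBm]; omega)
    rw [mem_compl] at ht₀
    refine ⟨insert t₀ B, by rw [card_insert_of_notMem ht₀, hBm], fun b hb t ht => ?_⟩
    rw [mem_insert, not_or] at ht
    rcases mem_insert.1 hb with rfl | hb
    · exact ht₀max t (mem_compl.2 ht.2)
    · exact hB b hb t ht.2

end Order

lemma sum_add_sum_lt_card_mul {α : Type*} {f : α → ℝ} {M : ℝ} {m : ℕ} {B : Finset α}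
    (hB : B.Nonempty) {S : Finset α} (hS : #S = m * #B)
    (h : ∀ b ∈ B, ∀ A ⊆ S, #A = m → f b + ∑ a ∈ A, f a < M) :
    ∑ b ∈ B, f b + ∑ a ∈ S, f a < #B * M := by
  classical
  induction hB using Nonempty.cons_induction generalizing S with
  | singleton b => simpa using h b (mem_singleton_self b) S subset_rfl (by simpa using hS)
  | cons b B hbB hB ih =>
    rw [card_cons] at hS
    obtain ⟨A, hAS, hA⟩ :=
      exists_subset_card_eq (hS ▸ Nat.le_mul_of_pos_right m (#B).succ_pos : m ≤ #S)
    have hrest := ih (S := S \ A)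
      (by rw [card_sdiff_of_subset hAS, hS, hA, Nat.mul_succ, Nat.add_sub_cancel])
      fun b' hb' A' hA'S => h b' (mem_cons_of_mem hb') A' (hA'S.trans sdiff_subset)
    have hb := h b (mem_cons_self b B) A hAS hA
    rw [sum_cons, card_cons, ← sum_sdiff hAS]
    push_cast
    linarith

end Finset

theorem mem_convexHull_of_forall_exists_dotProduct_le {ι : Type*} [Fintype ι]
    {t : Finset (ι → ℝ)} {x : ι → ℝ} (h : ∀ y : ι → ℝ, ∃ z ∈ t, x ⬝ᵥ y ≤ z ⬝ᵥ y) :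
    x ∈ convexHull ℝ (t : Set (ι → ℝ)) := by
  classical
  by_contra hx
  obtain ⟨f, u, hfu, hux⟩ := geometric_hahn_banach_closed_point (convex_convexHull ℝ _)
    (t.finite_toSet.isCompact_convexHull ℝ).isClosed hx
  let e : ι → ι → ℝ := fun i j => if i = j then 1 else 0
  have hf : ∀ z, f z = z ⬝ᵥ fun i => f (e i) := fun z => by
    simpa [dotProduct] using f.toLinearMap.pi_apply_eq_sum_univ z
  obtain ⟨z, hz, hxz⟩ := h fun i => f (e i)
  have hzu := hfu z (subset_convexHull ℝ _ hz)
  rw [hf] at hzu hux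
  linarith

namespace OrientedGraph

section Copies

variable {V : Type*} {G : OrientedGraph V} {k : ℕ} {U : Finset V}

lemma isTTCopy_iff : G.IsTTCopy k U ↔
    ∃ f : Fin k ↪ V, Set.range f = U ∧ ∀ i j : Fin k, i < j → G.adj (f i) (f j) := by
  refine exists_congr fun f => and_congr_left' ?_
  rw [← coe_inj, coe_map, coe_univ, Set.image_univ]

lemma isTTCopy_zero_empty : G.IsTTCopy 0 ∅ :=
  isTTCopy_iff.2 ⟨Function.Embedding.ofIsEmpty, by simp, fun i => i.elim0⟩

lemma IsTTCopy.card_eq (h : G.IsTTCopy k U) : #U = k := by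
  obtain ⟨f, rfl, -⟩ := h
  simp

variable [DecidableEq V] {v : V}

lemma IsTTCopy.insert_source (h : G.IsTTCopy k U) (hv : v ∉ U) (hadj : ∀ u ∈ U, G.adj v u) :
    G.IsTTCopy (k + 1) (insert v U) := by
  obtain ⟨f, hfU, hf⟩ := isTTCopy_iff.1 h
  refine isTTCopy_iff.2
    ⟨Fin.Embedding.cons f (by rwa [hfU, mem_coe]), by simp [hfU], fun i j hij => ?_⟩
  obtain ⟨j, rfl⟩ := Fin.exists_succ_eq.2 (Fin.ne_zero_of_lt hij)
  cases i using Fin.cases with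
  | zero => simpa using hadj _ (mem_coe.1 (hfU ▸ Set.mem_range_self j))
  | succ i => simpa using hf i j (Fin.succ_lt_succ_iff.1 hij)

lemma IsTTCopy.insert_sink (h : G.IsTTCopy k U) (hv : v ∉ U) (hadj : ∀ u ∈ U, G.adj u v) :
    G.IsTTCopy (k + 1) (insert v U) := by
  obtain ⟨f, hfU, hf⟩ := isTTCopy_iff.1 h
  refine isTTCopy_iff.2
    ⟨Fin.Embedding.snoc f (by rwa [hfU, mem_coe]), by simp [hfU], fun i j hij => ?_⟩
  obtain ⟨i, rfl⟩ := Fin.exists_castSucc_eq.2 (Fin.ne_last_of_lt hij)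
  cases j using Fin.lastCases with
  | last => simpa using hadj _ (mem_coe.1 (hfU ▸ Set.mem_range_self i))
  | cast j => simpa using hf i j (Fin.castSucc_lt_castSucc_iff.1 hij)

/-- One of the out- and in-neighbourhoods of `v` in `W` has at least `m` vertices. -/
lemma exists_isTTCopy_succ_mem (hG : G.IsTournament) {m : ℕ}
    (hm : ∀ S : Finset V, m ≤ #S → ∃ U ⊆ S, G.IsTTCopy k U) {W : Finset V} (hv : v ∉ W)
    (hW : 2 * m ≤ #W + 1) : ∃ U, G.IsTTCopy (k + 1) U ∧ v ∈ U ∧ U ⊆ insert v W := by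
  classical
  set Out := W.filter (G.adj v ·)
  set In := W.filter (G.adj · v)
  have hsplit : #W ≤ #Out + #In := by
    refine (card_le_card fun u hu => ?_).trans (card_union_le Out In)
    rcases hG v u (ne_of_mem_of_not_mem hu hv).symm with h | h <;> simp [Out, In, hu, h]
  have hvW {S : Finset V} (hS : S ⊆ W) : v ∉ S := fun h => hv (hS h)
  rcases le_or_gt m #Out with hOut | hOut
  · obtain ⟨U, hUOut, hU⟩ := hm Out hOut
    have hUW : U ⊆ W := hUOut.trans (filter_subset _ _)
    exact ⟨insert v U, hU.insert_source (hvW hUW) fun u hu => (mem_filter.1 (hUOut hu)).2,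
      mem_insert_self v U, insert_subset_insert v hUW⟩
  · obtain ⟨U, hUIn, hU⟩ := hm In (by omega)
    have hUW : U ⊆ W := hUIn.trans (filter_subset _ _)
    exact ⟨insert v U, hU.insert_sink (hvW hUW) fun u hu => (mem_filter.1 (hUIn hu)).2,
      mem_insert_self v U, insert_subset_insert v hUW⟩

lemma exists_isTTCopy_subset_of_two_pow_le (hG : G.IsTournament) {S : Finset V}
    (hS : 2 ^ k ≤ #S + 1) : ∃ U ⊆ S, G.IsTTCopy k U := by
  induction k generalizing S with
  | zero => exact ⟨∅, empty_subset S, isTTCopy_zero_empty⟩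
  | succ k ih =>
    have := k.one_le_two_pow
    rw [pow_succ] at hS
    obtain ⟨v, hv⟩ := card_pos.1 (by omega : 0 < #S)
    obtain ⟨U, hU, -, hUS⟩ := exists_isTTCopy_succ_mem hG (m := 2 ^ k - 1)
      (fun S' hS' => ih (S := S') (by omega)) (notMem_erase v S)
      (by rw [card_erase_of_mem hv]; omega)
    exact ⟨U, by rwa [insert_erase hv] at hUS, hU⟩

end Copies

section Comap

variable {V W : Type*}

def comap (G : OrientedGraph V) (f : W ↪ V) : OrientedGraph W :=
  ⟨fun a b => G.adj (f a) (f b), fun _ _ => G.asymm _ _⟩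

variable {G : OrientedGraph V} {f : W ↪ V}

lemma IsTournament.comap (hG : G.IsTournament) (f : W ↪ V) : (G.comap f).IsTournament :=
  fun _ _ hab => hG _ _ (f.injective.ne hab)

lemma IsTTCopy.map {k : ℕ} {U : Finset W} (h : (G.comap f).IsTTCopy k U) :
    G.IsTTCopy k (U.map f) := by
  obtain ⟨g, rfl, hg⟩ := h
  exact ⟨g.trans f, by rw [map_map], hg⟩

end Comap

section Ramsey

variable {V : Type*} {G : OrientedGraph V}

lemma oRamsey_mem (k : ℕ) :
    oRamsey k ∈ {m | ∀ G : OrientedGraph (Fin m), G.IsTournament → ∃ U, G.IsTTCopy k U} :=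
  Nat.sInf_mem ⟨2 ^ k, fun G hG =>
    (exists_isTTCopy_subset_of_two_pow_le hG (S := univ) (by simp)).imp fun _ h => h.2⟩

lemma exists_isTTCopy_subset_of_oRamsey_le (hG : G.IsTournament) {k : ℕ} {S : Finset V}
    (hS : oRamsey k ≤ #S) : ∃ U ⊆ S, G.IsTTCopy k U := by
  obtain ⟨S₀, hS₀S, hS₀⟩ := exists_subset_card_eq hS
  let e : Fin (oRamsey k) ↪ V :=
    (Fintype.equivFinOfCardEq (by simpa using hS₀)).symm.toEmbedding.trans
      (Function.Embedding.subtype (· ∈ S₀))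
  obtain ⟨U, hU⟩ := oRamsey_mem k (G.comap e) (hG.comap e)
  refine ⟨U.map e, fun v hv => ?_, hU.map⟩
  obtain ⟨i, -, rfl⟩ := mem_map.1 hv
  exact hS₀S (Subtype.prop _)

lemma le_oRamsey (k : ℕ) : k ≤ oRamsey k := by
  let T : OrientedGraph (Fin (oRamsey k)) := ⟨(· < ·), fun _ _ h => h.not_gt⟩
  obtain ⟨U, hU⟩ := oRamsey_mem k T fun _ _ => Ne.lt_or_gt
  simpa [hU.card_eq] using U.card_le_univ

end Ramsey

section Tiling

variable {V : Type*} [DecidableEq V] {G : OrientedGraph V}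

lemma exists_isTTCopy_add_sum_le (hG : G.IsTournament) {j : ℕ} (y : V → ℝ) {B A : Finset V}
    (hB : ∀ b ∈ B, ∀ t ∉ B, y t ≤ y b) (hr : 2 * oRamsey j ≤ #B + j) {b : V} (hb : b ∈ B)
    (hAB : Disjoint A B) (hA : #A = j) :
    ∃ U, G.IsTTCopy (j + 1) U ∧ y b + ∑ a ∈ A, y a ≤ ∑ u ∈ U, y u := by
  have hbW : b ∉ B.erase b ∪ A := by simp [disjoint_right.1 hAB hb]
  have hW : 2 * oRamsey j ≤ #(B.erase b ∪ A) + 1 := by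
    rw [card_union_of_disjoint (hAB.symm.mono_left (erase_subset b B)),
      card_erase_of_mem hb]
    have := card_pos.2 ⟨b, hb⟩
    omega
  obtain ⟨U, hU, hbU, hUW⟩ := exists_isTTCopy_succ_mem hG
    (fun S hS => exists_isTTCopy_subset_of_oRamsey_le hG hS) hbW hW
  refine ⟨U, hU, ?_⟩
  rw [← add_sum_erase U y hbU]
  refine add_le_add_right (sum_le_sum_of_sdiff_subset_of_forall_notMem_le hB ?_ hAB ?_) _
  · rw [card_erase_of_mem hbU, hU.card_eq, hA, Nat.add_sub_cancel]
  · intro x hx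
    obtain ⟨hxU, hxA⟩ := mem_sdiff.1 hx
    have hxW := hUW (mem_of_mem_erase hxU)
    simp only [mem_insert, ne_of_mem_erase hxU, mem_union, hxA,
      mem_erase, false_or, or_false] at hxW
    exact hxW.2

theorem exists_isTTCopy_sum_div_le_sum [Fintype V] (hG : G.IsTournament) {j q : ℕ}
    (hq : 0 < q) (hV : Fintype.card V = (j + 1) * q) (hr : 2 * oRamsey j ≤ q + j)
    (y : V → ℝ) : ∃ U, G.IsTTCopy (j + 1) U ∧ (∑ v, y v) / q ≤ ∑ u ∈ U, y u := by
  by_contra! h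
  obtain ⟨B, hBq, hB⟩ := exists_card_eq_forall_notMem_le y (m := q)
    (by rw [hV]; exact Nat.le_mul_of_pos_left q j.succ_pos)
  have hblock : ∀ b ∈ B, ∀ A ⊆ Bᶜ, #A = j → y b + ∑ a ∈ A, y a < (∑ v, y v) / q := by
    intro b hb A hA hAj
    obtain ⟨U, hU, hle⟩ := exists_isTTCopy_add_sum_le hG y hB (hBq ▸ hr) hb
      (subset_compl_iff_disjoint_right.1 hA) hAj
    exact hle.trans_lt (h U hU)
  have hlt := sum_add_sum_lt_card_mul (card_pos.1 (hBq ▸ hq))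
    (by rw [card_compl, hBq, hV, Nat.succ_mul, Nat.add_sub_cancel]) hblock
  rw [sum_add_sum_compl, hBq, mul_div_cancel₀ _ (by positivity)] at hlt
  exact lt_irrefl _ hlt

theorem hasPerfectFracTiling_of_forall_exists_sum_div_le [Fintype V] {k q : ℕ} (hk : k ≠ 0)
    (hV : Fintype.card V = k * q)
    (h : ∀ y : V → ℝ, ∃ U, G.IsTTCopy k U ∧ (∑ v, y v) / q ≤ ∑ u ∈ U, y u) :
    G.HasPerfectFracTiling k := by
  classical
  let ind : Finset V → V → ℝ := fun U v => if v ∈ U then 1 else 0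
  have hind : Function.Injective ind := fun U U' hUU' =>
    ext fun v => by
      have h := congrFun hUU' v
      simp only [ind] at h
      split_ifs at h <;> simp_all
  let C := univ.filter (G.IsTTCopy k)
  have hx : (fun _ => (q : ℝ)⁻¹) ∈ convexHull ℝ (C.image ind : Set (V → ℝ)) := by
    refine mem_convexHull_of_forall_exists_dotProduct_le fun y => ?_
    obtain ⟨U, hU, hle⟩ := h y
    refine ⟨ind U, mem_image_of_mem ind (by simpa [C] using hU), ?_⟩
    simpa [dotProduct, ind, mul_sum, div_eq_inv_mul] using hle
  obtain ⟨w, hw0, hw1, hwx⟩ := mem_convexHull'.1 hx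
  rw [sum_image hind.injOn] at hw1 hwx
  have hcover (v : V) : ∑ U ∈ C, (if v ∈ U then w (ind U) else 0) = (q : ℝ)⁻¹ := by
    simpa [Finset.sum_apply, ind] using congrFun hwx v
  refine ⟨fun U => if G.IsTTCopy k U then q * w (ind U) else 0,
    ⟨fun U => ?_, fun U hU => if_neg hU, fun v => ?_⟩, ?_⟩
  · dsimp only
    split_ifs with hU
    · exact mul_nonneg q.cast_nonneg (hw0 _ (mem_image_of_mem ind (by simpa [C] using hU)))
    · exact le_rfl
  · calc ∑ U ∈ univ.filter (v ∈ ·), (if G.IsTTCopy k U then q * w (ind U) else 0)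
          = q * ∑ U ∈ C, (if v ∈ U then w (ind U) else 0) := by
            rw [mul_sum, sum_filter, sum_filter]
            refine sum_congr rfl fun U _ => ?_
            split_ifs <;> simp
      _ ≤ 1 := by
            rw [hcover]
            exact mul_inv_le_one
  · rw [← sum_filter, ← mul_sum, hw1, hV]
    push_cast
    field_simp

end Tiling

end OrientedGraph

/-- For `k ≥ 3`, every tournament on `n = k·(2·r(k-1) - k + 1)` vertices has a perfect
fractional `T_k`-tiling; equivalently, `trs(k) ≤ k·(2·r(k-1) - k + 1)`. -/
theorem stmt_6 (k : ℕ) (hk : 3 ≤ k) :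
    (∀ G : OrientedGraph (Fin (k * (2 * oRamsey (k - 1) - k + 1))), G.IsTournament →
      G.HasPerfectFracTiling k) ∧ trs k ≤ k * (2 * oRamsey (k - 1) - k + 1) := by
  have tiling : ∀ G : OrientedGraph (Fin (k * (2 * oRamsey (k - 1) - k + 1))), G.IsTournament →
      G.HasPerfectFracTiling k := by
    intro G hG
    obtain ⟨j, rfl⟩ : ∃ j, k = j + 1 := ⟨k - 1, by omega⟩
    have hj := OrientedGraph.le_oRamsey j
    exact OrientedGraph.hasPerfectFracTiling_of_forall_exists_sum_div_le (Nat.succ_ne_zero j)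
      (Fintype.card_fin _) (OrientedGraph.exists_isTTCopy_sum_div_le_sum hG (Nat.succ_pos _)
        (Fintype.card_fin _) (by rw [Nat.add_sub_cancel]; omega))
  exact ⟨tiling, Nat.sInf_le ⟨Nat.mul_pos (by omega) (Nat.succ_pos _), tiling⟩⟩
end

section
/- For every n divisible by 4, there exists an oriented graph G on n vertices with minimum total degree ⌈11n/12⌉ − 1 that contains no perfect T_4-tiling. -/
open Finset

/-!
Blow up the Paley tournament on `7` vertices, which contains no `T_4`: one vertex becomes a
transitive tournament `X` on `n/2 - 1` vertices, the other six become independent sets of size at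
most `n/12 + 1`. A `T_4` in the blow-up meeting `X` at most once would project onto a `T_4` of
the Paley tournament, so every copy meets `X` twice, and the `n/4` copies of a perfect tiling would
need `n/2 > |X|` vertices of `X`. A vertex outside `X` is adjacent to everything outside its own class,
so the minimum degree is `n - (n/12 + 1) = ⌈11n/12⌉ - 1`.
-/

namespace OrientedGraph

variable {V W : Type*}

lemma irrefl (G : OrientedGraph V) (v : V) : ¬ G.adj v v :=
  fun h => G.asymm v v h h

lemma IsTTCopy.card_eq_s15 {G : OrientedGraph V} {k : ℕ} {U : Finset V} (hU : G.IsTTCopy k U) :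
    #U = k := by
  obtain ⟨f, rfl, -⟩ := hU
  simp

lemma exists_isTTCopy_of_adj (G : OrientedGraph V) {k : ℕ} (g : Fin k → V)
    (hg : ∀ i j, i < j → G.adj (g i) (g j)) : ∃ U, G.IsTTCopy k U := by
  have hinj : Function.Injective g := by
    intro i j hij
    by_contra hne
    rcases lt_or_gt_of_ne hne with h | h
    · exact G.irrefl _ (hij ▸ hg i j h)
    · exact G.irrefl _ (hij ▸ hg j i h)
  exact ⟨_, ⟨g, hinj⟩, rfl, hg⟩

def blowUp [LinearOrder V] (T : OrientedGraph W) (cls : V → W) (c₀ : W) : OrientedGraph V where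
  adj u v := (cls u = c₀ ∧ cls v = c₀ ∧ u < v) ∨ T.adj (cls u) (cls v)
  asymm u v := by
    rintro (⟨hu, hv, huv⟩ | huv) (⟨hv', hu', hvu⟩ | hvu)
    · exact lt_asymm huv hvu
    · rw [hu, hv] at hvu; exact T.irrefl _ hvu
    · rw [hu', hv'] at huv; exact T.irrefl _ huv
    · exact T.asymm _ _ huv hvu

section BlowUp

variable [LinearOrder V] {T : OrientedGraph W} {cls : V → W} {c₀ : W}

lemma blowUp_adj_or_adj_iff (hT : T.IsTournament) (u v : V) :
    (blowUp T cls c₀).adj v u ∨ (blowUp T cls c₀).adj u v ↔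
      cls u ≠ cls v ∨ (cls v = c₀ ∧ u ≠ v) := by
  constructor
  · rintro ((⟨hv, hu, hvu⟩ | h) | (⟨hu, hv, huv⟩ | h))
    · exact Or.inr ⟨hv, hvu.ne'⟩
    · exact Or.inl fun he => T.irrefl _ (he ▸ h)
    · exact Or.inr ⟨hv, huv.ne⟩
    · exact Or.inl fun he => T.irrefl _ (he ▸ h)
  · intro h
    by_cases hcls : cls u = cls v
    · obtain ⟨hv, hne⟩ := h.resolve_left (not_not_intro hcls)
      exact (lt_or_gt_of_ne hne).symm.imp (fun h => Or.inl ⟨hv, hcls ▸ hv, h⟩)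
        (fun h => Or.inl ⟨hcls ▸ hv, hv, h⟩)
    · exact (hT _ _ (Ne.symm hcls)).imp Or.inr Or.inr

lemma degree_blowUp_of_cls_eq [Fintype V] (hT : T.IsTournament) {v : V} (hv : cls v = c₀) :
    (blowUp T cls c₀).degree v = Fintype.card V - 1 := by
  classical
  have hiff (u : V) : cls u ≠ cls v ∨ (cls v = c₀ ∧ u ≠ v) ↔ u ≠ v :=
    ⟨by rintro (h | ⟨-, h⟩) rfl <;> contradiction, fun h => Or.inr ⟨hv, h⟩⟩
  rw [degree, Nat.card_eq_fintype_card, Fintype.card_subtype,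
    filter_congr fun u _ => (blowUp_adj_or_adj_iff hT u v).trans (hiff u), filter_ne',
    card_erase_of_mem (mem_univ v), card_univ]

lemma degree_blowUp_of_cls_ne [Fintype V] [DecidableEq W] (hT : T.IsTournament) {v : V}
    (hv : cls v ≠ c₀) :
    (blowUp T cls c₀).degree v = Fintype.card V - #{u | cls u = cls v} := by
  classical
  have hiff (u : V) : cls u ≠ cls v ∨ (cls v = c₀ ∧ u ≠ v) ↔ ¬ cls u = cls v :=
    or_iff_left fun h => hv h.1
  have hsplit := card_filter_add_card_filter_not (s := univ) fun u => cls u = cls v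
  rw [degree, Nat.card_eq_fintype_card, Fintype.card_subtype,
    filter_congr fun u _ => (blowUp_adj_or_adj_iff hT u v).trans (hiff u), ← card_univ]
  omega

lemma two_le_card_filter_of_isTTCopy_blowUp [DecidableEq W] {k : ℕ}
    (hT : ∀ U, ¬ T.IsTTCopy k U) {U : Finset V} (hU : (blowUp T cls c₀).IsTTCopy k U) :
    2 ≤ #{v ∈ U | cls v = c₀} := by
  obtain ⟨f, rfl, hf⟩ := hU
  by_contra! hlt
  have hle : ∀ i j, cls (f i) = c₀ → cls (f j) = c₀ → i = j := fun i j hi hj =>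
    f.injective (card_le_one.1 (Nat.le_of_lt_succ hlt) _ (by simpa using hi) _ (by simpa using hj))
  refine (T.exists_isTTCopy_of_adj (cls ∘ f) fun i j hij => ?_).elim hT
  rcases hf i j hij with ⟨hi, hj, -⟩ | h
  · exact absurd (hle i j hi hj) hij.ne
  · exact h

end BlowUp

lemma HasPerfectTiling.mul_card_le [Fintype V] [DecidableEq V] {G : OrientedGraph V} {k m : ℕ}
    (hG : G.HasPerfectTiling k) (p : V → Prop) [DecidablePred p]
    (hp : ∀ U, G.IsTTCopy k U → m ≤ #{v ∈ U | p v}) :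
    m * Fintype.card V ≤ k * #{v | p v} := by
  obtain ⟨P, hcopy, hdisj, hcover⟩ := hG
  have hsum (q : V → Prop) [DecidablePred q] : #{v | q v} = ∑ U ∈ P, #{v ∈ U | q v} := by
    rw [← hcover, sup_eq_biUnion, filter_biUnion]
    exact card_biUnion (hdisj.mono fun U => filter_subset q U)
  have hcard : Fintype.card V = k * #P := by
    have h := hsum fun _ => True
    rw [filter_true, card_univ] at h
    rw [h, sum_congr rfl fun U hU => by rw [filter_true, (hcopy U hU).card_eq_s15], sum_const,
      smul_eq_mul, mul_comm]
  calc m * Fintype.card V = k * ∑ _U ∈ P, m := by rw [hcard, sum_const, smul_eq_mul]; ring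
    _ ≤ k * #{v | p v} := by
      rw [hsum p]
      exact Nat.mul_le_mul_left k (sum_le_sum fun U hU => hp U (hcopy U hU))

end OrientedGraph

open OrientedGraph

/-- The Paley tournament: `a → b` iff `b - a` is a nonzero square modulo `7`. -/
def paley7 : OrientedGraph (Fin 7) where
  adj a b := b - a = 1 ∨ b - a = 2 ∨ b - a = 4
  asymm := by decide

instance : DecidableRel paley7.adj := fun a b =>
  inferInstanceAs (Decidable (b - a = 1 ∨ b - a = 2 ∨ b - a = 4))

lemma paley7_isTournament : paley7.IsTournament := by
  unfold IsTournament; decide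

lemma paley7_not_isTTCopy_four (U : Finset (Fin 7)) : ¬ paley7.IsTTCopy 4 U := by
  rintro ⟨f, -, hf⟩
  have key : ∀ a b c d : Fin 7, ¬ (paley7.adj a b ∧ paley7.adj a c ∧ paley7.adj a d ∧
      paley7.adj b c ∧ paley7.adj b d ∧ paley7.adj c d) := by decide
  exact key _ _ _ _ ⟨hf 0 1 (by decide), hf 0 2 (by decide), hf 0 3 (by decide),
    hf 1 2 (by decide), hf 1 3 (by decide), hf 2 3 (by decide)⟩

/-- The clamp `min _ 5` only makes the definition total: it is inactive for even `n`. -/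
def blockClass (n : ℕ) (v : Fin n) : Fin 7 :=
  if v.val < n / 2 - 1 then 0 else ⟨1 + min ((v.val - (n / 2 - 1)) / (n / 12 + 1)) 5, by omega⟩

lemma Fin.card_filter_le_val_lt (n a b : ℕ) :
    #{v : Fin n | a ≤ v.val ∧ v.val < b} = min b n - a := by
  rw [← Nat.card_Ico]
  refine card_bij (fun v _ => v.val) (fun v hv => ?_) (fun v _ w _ h => Fin.ext h) (fun x hx => ?_)
  · simp only [mem_filter, mem_univ, true_and] at hv
    simp only [mem_Ico]; omega
  · simp only [mem_Ico] at hx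
    exact ⟨⟨x, by omega⟩, by simp only [mem_filter, mem_univ, true_and]; omega, rfl⟩

section BlockClass

variable {n : ℕ}

lemma blockClass_eq_zero_iff {v : Fin n} : blockClass n v = 0 ↔ v.val < n / 2 - 1 := by
  unfold blockClass
  split_ifs with h
  · simpa using h
  · exact iff_of_false (by simp [Fin.ext_iff]) h

lemma blockClass_eq_iff (hn : 2 ∣ n) {v : Fin n} {c : Fin 7} (hc : c ≠ 0) :
    blockClass n v = c ↔ n / 2 - 1 + (c - 1) * (n / 12 + 1) ≤ v.val ∧
      v.val < n / 2 - 1 + (c - 1) * (n / 12 + 1) + (n / 12 + 1) := by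
  have hc' : 1 ≤ c.val := Nat.one_le_iff_ne_zero.2 (Fin.val_ne_zero_iff.2 hc)
  unfold blockClass
  split_ifs with h
  · exact iff_of_false (Ne.symm hc) (by omega)
  · have hB : 0 < n / 12 + 1 := Nat.succ_pos _
    have hq := (Nat.div_lt_iff_lt_mul hB).2 (show v.val - (n / 2 - 1) < 6 * (n / 12 + 1) by omega)
    rw [Fin.ext_iff, Fin.val_mk, min_eq_left (by omega),
      show ∀ q, 1 + q = c.val ↔ q = c.val - 1 from fun q => by omega, Nat.div_eq_iff hB]
    omega

lemma card_blockClass_zero : #{v : Fin n | blockClass n v = 0} = n / 2 - 1 := by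
  simp only [blockClass_eq_zero_iff, Fin.card_filter_val_lt]
  omega

lemma card_blockClass_le (hn : 2 ∣ n) {c : Fin 7} (hc : c ≠ 0) :
    #{v : Fin n | blockClass n v = c} ≤ n / 12 + 1 := by
  simp only [blockClass_eq_iff hn hc, Fin.card_filter_le_val_lt]
  omega

lemma card_blockClass_one (hn : 2 ∣ n) (hpos : 0 < n) :
    #{v : Fin n | blockClass n v = 1} = n / 12 + 1 := by
  simp only [blockClass_eq_iff hn one_ne_zero, Fin.val_one, Fin.card_filter_le_val_lt]
  omega

lemma minDegree_blowUp_blockClass (hn : 2 ∣ n) (hpos : 0 < n) :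
    (blowUp paley7 (blockClass n) 0).minDegree = n - (n / 12 + 1) := by
  refine IsLeast.csInf_eq ⟨⟨⟨n / 2 - 1, by omega⟩, ?_⟩, ?_⟩
  · have h1 : blockClass n ⟨n / 2 - 1, by omega⟩ = 1 :=
      (blockClass_eq_iff hn one_ne_zero).2 (by simp only [Fin.val_one]; omega)
    rw [degree_blowUp_of_cls_ne paley7_isTournament (h1 ▸ one_ne_zero), h1,
      card_blockClass_one hn hpos, Fintype.card_fin]
  · rintro _ ⟨v, rfl⟩
    by_cases hv : blockClass n v = 0
    · rw [degree_blowUp_of_cls_eq paley7_isTournament hv, Fintype.card_fin]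
      omega
    · have := card_blockClass_le hn hv
      rw [degree_blowUp_of_cls_ne paley7_isTournament hv, Fintype.card_fin]
      omega

lemma ceil_eleven_mul_div_twelve (hn : 0 < n) : ⌈11 * (n : ℚ) / 12⌉₊ = n - n / 12 := by
  rw [Nat.ceil_eq_iff (by omega), lt_div_iff₀ (by norm_num), div_le_iff₀ (by norm_num)]
  exact ⟨by exact_mod_cast (show (n - n / 12 - 1) * 12 < 11 * n by omega),
    by exact_mod_cast (show 11 * n ≤ (n - n / 12) * 12 by omega)⟩

end BlockClass

/-- For every positive `n` divisible by `4`, there is an oriented graph on `n` vertices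
with minimum total degree `⌈11n/12⌉ - 1` and no perfect `T_4`-tiling. -/
theorem stmt_15 (n : ℕ) (hpos : 0 < n) (hdvd : 4 ∣ n) :
    ∃ G : OrientedGraph (Fin n),
      G.minDegree = ⌈(11 * (n : ℚ)) / 12⌉₊ - 1 ∧ ¬ G.HasPerfectTiling 4 := by
  refine ⟨blowUp paley7 (blockClass n) 0, ?_, fun hP => ?_⟩
  · rw [minDegree_blowUp_blockClass (dvd_trans (by norm_num) hdvd) hpos,
      ceil_eleven_mul_div_twelve hpos]
    omega
  · have h := hP.mul_card_le _ fun _ =>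
      two_le_card_filter_of_isTTCopy_blowUp paley7_not_isTTCopy_four
    rw [Fintype.card_fin, card_blockClass_zero] at h
    omega
end
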